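/- arXiv:1202.6551 — 2 statements merged into one kernel-verified Lean document; each statement's English description precedes it below -/
import Mathlib

section
/- For any finite simple graph G=(V,E) and any vertex u ∈ V, (√X_u)† · √Z_{N(u)} · |G⟩ = |G*u⟩, where G*u is the local complementation of G at u. -/
/-- Local complementation `G*u`. -/
def localComp {V : Type*} (G : SimpleGraph V) (u : V) : SimpleGraph V where
  Adj x y := x ≠ y ∧ Xor (G.Adj x y) (G.Adj u x ∧ G.Adj u y)
  symm := by
    constructor
    rintro x y ⟨hxy, h⟩
    refine ⟨hxy.symm, ?_⟩
    rw [G.adj_comm y x, and_comm]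
    exact h
  loopless := by constructor; rintro x ⟨h, -⟩; exact h rfl

instance {V : Type*} [DecidableEq V] (G : SimpleGraph V) [DecidableRel G.Adj] (u : V) :
    DecidableRel (localComp G u).Adj :=
  fun x y => inferInstanceAs (Decidable (x ≠ y ∧ Xor (G.Adj x y) (G.Adj u x ∧ G.Adj u y)))

noncomputable section

/-- The state space of qubits indexed by `V`: ℂ^{2^|V|}, given by amplitudes on the
computational basis states `|x⟩`, `x : V → Bool`. -/
abbrev QState (V : Type*) := (V → Bool) → ℂ

variable {V : Type*} [Fintype V] [DecidableEq V]

/-- The Pauli operator `Z_S = ∏_{u∈S} Z_u`: `Z_S |x⟩ = (-1)^{|S ∩ supp x|} |x⟩`. -/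
def Zop (S : Finset V) (ψ : QState V) : QState V :=
  fun x => (-1 : ℂ) ^ (S.filter (fun u => x u = true)).card * ψ x

/-- The Pauli operator `X_u`: flips qubit `u`. -/
def Xop (u : V) (ψ : QState V) : QState V :=
  fun x => ψ (Function.update x u (!x u))

/-- `q(x)`: the number of edges of `G` with both endpoints in the support of `x`. -/
def qVal (G : SimpleGraph V) [DecidableRel G.Adj] (x : V → Bool) : ℕ :=
  (G.edgeFinset.filter (fun e => ∀ v ∈ e, x v = true)).card

/-- The graph state `|G⟩ = 2^{-n/2} ∑_x (-1)^{q(x)} |x⟩`. -/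
def graphState (G : SimpleGraph V) [DecidableRel G.Adj] : QState V :=
  fun x => (-1 : ℂ) ^ qVal G x / (Real.sqrt (2 ^ Fintype.card V) : ℂ)

/-- The signed graph state `|G;S⟩ = Z_S |G⟩`. -/
def sgState (G : SimpleGraph V) [DecidableRel G.Adj] (S : Finset V) : QState V :=
  Zop S (graphState G)

/-- The hermitian inner product on `QState V`. -/
def qInner (ψ φ : QState V) : ℂ := ∑ x : V → Bool, starRingEnd ℂ (ψ x) * φ x

/-- `√X_u := (e^{iπ/4}/√2)(I - i·X_u)`. -/
def sqrtX (u : V) (ψ : QState V) : QState V :=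
  fun x => (Complex.exp (Complex.I * (Real.pi / 4)) / (Real.sqrt 2 : ℂ)) *
    (ψ x - Complex.I * Xop u ψ x)

/-- `√Z_S := ∏_{u∈S} √Z_u`, where `√Z_u := (e^{iπ/4}/√2)(I - i·Z_u)`: each `√Z_u` is
diagonal with `√Z_u |x⟩ = (e^{iπ/4}/√2)(1 - i·(-1)^{x_u}) |x⟩`, so `√Z_S` is diagonal
with the product of these eigenvalues. -/
def sqrtZset (S : Finset V) (ψ : QState V) : QState V :=
  fun x => (∏ u ∈ S, (Complex.exp (Complex.I * (Real.pi / 4)) / (Real.sqrt 2 : ℂ)) *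
    (1 - Complex.I * (if x u then -1 else 1))) * ψ x

end

/-!
With `c = e^{iπ/4}/√2 = (1 + i)/2`, the operator `√Z_S` multiplies `|x⟩` by `i^{|S ∩ supp x|}`
and `(√X_u)†` sends `φ` to `c̄ (φ + i X_u φ)`. Write `k = |N(u) ∩ supp y|`; it does not change
when qubit `u` is flipped. Flipping `u` changes the number of edges inside the support by `k`,
and the edge set of `G*u` is the symmetric difference of that of `G` and the clique on `N(u)`,
which contributes `k choose 2` edges inside `supp y`. So the amplitude of `|y⟩` on the left is
`(-1)^{q(y)} · c̄ i^k (1 + i (-1)^k)`, and `c̄ i^k (1 + i (-1)^k) = (-1)^{k choose 2}`.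
-/

open Finset Complex ComplexConjugate SimpleGraph
open scoped symmDiff

lemma exp_pi_div_four_div_sqrt_two :
    exp (I * (Real.pi / 4)) / (Real.sqrt 2 : ℂ) = (1 + I) / 2 := by
  have hne : (Real.sqrt 2 : ℂ) ≠ 0 := by exact_mod_cast (Real.sqrt_pos.2 two_pos).ne'
  rw [mul_comm, exp_mul_I, ← ofReal_ofNat, ← ofReal_div, ← ofReal_cos, ← ofReal_sin,
    Real.cos_pi_div_four, Real.sin_pi_div_four, div_eq_div_iff hne two_ne_zero]
  push_cast
  ring

lemma one_sub_I_div_two_mul_I_pow (k : ℕ) :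
    (1 - I) / 2 * I ^ k * (1 + I * (-1) ^ k) = (-1) ^ k.choose 2 := by
  induction k with
  | zero => simp only [pow_zero, mul_one, Nat.choose_zero_succ]; linear_combination (-1 / 2 : ℂ) * I_sq
  | succ k ih =>
    -- both sides pick up the factor `(-1)^k` when `k` increases by one
    have hsq : ((-1 : ℂ) ^ k) ^ 2 = 1 := by rw [← pow_mul, mul_comm, pow_mul]; norm_num
    rw [show (k + 1).choose 2 = k + k.choose 2 by simp [Nat.choose_succ_succ'], pow_succ I,
      pow_succ (-1 : ℂ), pow_add (-1 : ℂ) k, ← ih]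
    linear_combination (1 - I) / 2 * I ^ k * (-(-1) ^ k * I_sq - I * hsq)

section Operators

variable {V : Type*}

lemma sqrtZset_apply (S : Finset V) (ψ : QState V) (x : V → Bool) :
    sqrtZset S ψ x = I ^ #{v ∈ S | x v = true} * ψ x := by
  have hfactor (v : V) : (1 + I) / 2 * (1 - I * (if x v then -1 else 1)) =
      if x v = true then I else 1 := by
    cases x v
    · simp only [Bool.false_eq_true, ↓reduceIte, mul_one]
      linear_combination (-1 / 2 : ℂ) * I_sq
    · simp only [↓reduceIte, mul_neg, mul_one, sub_neg_eq_add]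
      linear_combination (1 / 2 : ℂ) * I_sq
  simp only [sqrtZset, exp_pi_div_four_div_sqrt_two, hfactor, prod_ite, prod_const_one,
    mul_one, prod_const]

lemma update_not_involutive [DecidableEq V] (u : V) :
    Function.Involutive fun x : V → Bool => Function.update x u (!x u) := by
  intro x; simp

variable [Fintype V] [DecidableEq V]

lemma qInner_Xop (u : V) (φ ψ : QState V) : qInner φ (Xop u ψ) = qInner (Xop u φ) ψ :=
  Fintype.sum_equiv (update_not_involutive u).toPerm _ _ fun x => by simp [Xop]

lemma qInner_sqrtX (u : V) (φ ψ : QState V) :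
    qInner φ (sqrtX u ψ) = qInner (fun x => (1 - I) / 2 * (φ x + I * Xop u φ x)) ψ :=
  calc qInner φ (sqrtX u ψ) = (1 + I) / 2 * (qInner φ ψ - I * qInner φ (Xop u ψ)) := by
        simp only [qInner, sqrtX, exp_pi_div_four_div_sqrt_two, mul_sum, ← sum_sub_distrib]
        exact sum_congr rfl fun x _ => by ring
    _ = (1 + I) / 2 * (qInner φ ψ - I * qInner (Xop u φ) ψ) := by rw [qInner_Xop]
    _ = _ := by
        simp only [qInner, mul_sum, ← sum_sub_distrib]
        exact sum_congr rfl fun x _ => by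
          simp only [map_mul, map_add, map_div₀, map_sub, map_one, conj_I, map_ofNat]; ring

lemma qInner_single (φ : QState V) (y : V → Bool) : qInner φ (Pi.single y 1) = conj (φ y) := by
  simp [qInner, Pi.single_apply]

lemma eq_of_forall_qInner_eq {φ φ' : QState V} (h : ∀ ψ, qInner φ ψ = qInner φ' ψ) :
    φ = φ' :=
  funext fun y => (starRingEnd ℂ).injective <| by simpa [qInner_single] using h (Pi.single y 1)

lemma adjoint_sqrtX_eq (u : V) (sqrtXdag : QState V → QState V)
    (hdag : ∀ φ ψ : QState V, qInner φ (sqrtX u ψ) = qInner (sqrtXdag φ) ψ)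
    (φ : QState V) :
    sqrtXdag φ = fun x => (1 - I) / 2 * (φ x + I * Xop u φ x) :=
  eq_of_forall_qInner_eq fun ψ => by rw [← hdag, qInner_sqrtX]

end Operators

section EdgeCounts

variable {V : Type*}

lemma localComp_eq_symmDiff (G : SimpleGraph V) (u : V) :
    localComp G u = G ∆ fromEdgeSet (G.neighborSet u).sym2 := by
  ext a b
  simp only [localComp, Xor, symmDiff_def, sup_adj, sdiff_adj, fromEdgeSet_adj,
    Set.mk_mem_sym2_iff, mem_neighborSet]
  have := G.ne_of_adj (a := a) (b := b)
  tauto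

variable [Fintype V] [DecidableEq V]

lemma filter_neighborFinset_update (G : SimpleGraph V) [DecidableRel G.Adj] (u : V)
    (x : V → Bool) (b : Bool) :
    {v ∈ G.neighborFinset u | Function.update x u b v = true} =
      {v ∈ G.neighborFinset u | x v = true} :=
  filter_congr fun v hv => by
    rw [Function.update_of_ne (G.ne_of_adj ((G.mem_neighborFinset u v).1 hv)).symm]

lemma qVal_update_true (G : SimpleGraph V) [DecidableRel G.Adj] {u : V} {x : V → Bool}
    (hx : x u = false) :
    qVal G (Function.update x u true) = qVal G x + #{v ∈ G.neighborFinset u | x v = true} := by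
  have hinj : Function.Injective fun w => s(u, w) := fun _ _ => Sym2.congr_right.1
  have hedges : {e ∈ G.edgeFinset | ∀ v ∈ e, Function.update x u true v = true} =
      {e ∈ G.edgeFinset | ∀ v ∈ e, x v = true} ∪
        {v ∈ G.neighborFinset u | x v = true}.image fun w => s(u, w) := by
    ext e
    by_cases hu : u ∈ e
    · obtain ⟨w, rfl⟩ := Sym2.mem_iff_exists.1 hu
      by_cases hw : w = u
      · subst hw; simp
      · rw [mem_union, hinj.mem_finset_image]
        simp [Function.update_of_ne hw, hx]
    · have hsupp : (∀ v ∈ e, Function.update x u true v = true) ↔ ∀ v ∈ e, x v = true :=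
        forall₂_congr fun v hv => by rw [Function.update_of_ne (ne_of_mem_of_not_mem hv hu)]
      have hnew : e ∉ {v ∈ G.neighborFinset u | x v = true}.image fun w => s(u, w) := by
        rw [mem_image]
        rintro ⟨w, -, rfl⟩
        exact hu (Sym2.mem_mk_left u w)
      simp only [mem_union, mem_filter, hsupp, hnew, or_false]
  have hdisj : Disjoint {e ∈ G.edgeFinset | ∀ v ∈ e, x v = true}
      ({v ∈ G.neighborFinset u | x v = true}.image fun w => s(u, w)) := by
    simp only [Finset.disjoint_left, mem_filter, mem_image, not_exists, not_and]
    rintro _ ⟨-, hall⟩ w - rfl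
    simp [hx] at hall
  rw [qVal, hedges, card_union_of_disjoint hdisj, card_image_of_injective _ hinj]
  rfl

lemma neg_one_pow_qVal_update_not (G : SimpleGraph V) [DecidableRel G.Adj] (u : V)
    (x : V → Bool) :
    (-1 : ℂ) ^ qVal G (Function.update x u (!x u)) =
      (-1) ^ qVal G x * (-1) ^ #{v ∈ G.neighborFinset u | x v = true} := by
  cases hx : x u
  · rw [Bool.not_false, qVal_update_true G hx, pow_add]
  · have hq : qVal G x = qVal G (Function.update x u false) +
        #{v ∈ G.neighborFinset u | x v = true} := by
      have h := qVal_update_true G (Function.update_self u false x)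
      rwa [Function.update_idem, Function.update_eq_self_iff.2 hx.symm,
        filter_neighborFinset_update] at h
    have hsq : ((-1 : ℂ) ^ #{v ∈ G.neighborFinset u | x v = true}) ^ 2 = 1 := by
      rw [← pow_mul, mul_comm, pow_mul, neg_one_sq, one_pow]
    rw [Bool.not_true, hq, pow_add]
    linear_combination -(-1 : ℂ) ^ qVal G (Function.update x u false) * hsq

lemma neg_one_pow_qVal_eq_prod (G : SimpleGraph V) [DecidableRel G.Adj] (x : V → Bool) :
    (-1 : ℂ) ^ qVal G x =
      ∏ e : Sym2 V, if e ∈ G.edgeSet ∧ ∀ v ∈ e, x v = true then -1 else 1 := by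
  rw [prod_ite, prod_const_one, mul_one, prod_const, qVal]
  congr 2
  ext e
  simp

lemma neg_one_pow_qVal_symmDiff (G H : SimpleGraph V) [DecidableRel G.Adj] [DecidableRel H.Adj]
    [DecidableRel (G ∆ H).Adj] (x : V → Bool) :
    (-1 : ℂ) ^ qVal (G ∆ H) x = (-1) ^ qVal G x * (-1) ^ qVal H x := by
  simp only [neg_one_pow_qVal_eq_prod, ← prod_mul_distrib]
  refine prod_congr rfl fun e _ => ?_
  induction e using Sym2.ind with
  | _ a b =>
    simp only [mem_edgeSet, symmDiff_def, sup_adj, sdiff_adj]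
    split_ifs <;> simp_all

lemma qVal_fromEdgeSet_sym2 (s : Finset V) [DecidableRel (fromEdgeSet (s : Set V).sym2).Adj]
    (x : V → Bool) :
    qVal (fromEdgeSet (s : Set V).sym2) x = (#{v ∈ s | x v = true}).choose 2 := by
  have hedges : {e ∈ (fromEdgeSet (s : Set V).sym2).edgeFinset | ∀ v ∈ e, x v = true} =
      {e ∈ {v ∈ s | x v = true}.sym2 | ¬e.IsDiag} := by
    ext e
    induction e using Sym2.ind with
    | _ a b =>
      simp only [mem_filter, mem_edgeFinset, edgeSet_fromEdgeSet, Set.mem_sdiff,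
        Set.mk_mem_sym2_iff, SetLike.mem_coe, Sym2.mem_diagSet, Sym2.mk_isDiag_iff, Sym2.mem_iff,
        forall_eq_or_imp, forall_eq, mem_sym2_iff]
      tauto
  rw [qVal, hedges, sym2_eq_image, Sym2.filter_image_mk_not_isDiag, Sym2.card_image_offDiag]

lemma neg_one_pow_qVal_localComp (G : SimpleGraph V) [DecidableRel G.Adj] (u : V)
    (x : V → Bool) :
    (-1 : ℂ) ^ qVal (localComp G u) x =
      (-1) ^ qVal G x * (-1) ^ (#{v ∈ G.neighborFinset u | x v = true}).choose 2 := by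
  classical
  have h := neg_one_pow_qVal_symmDiff G (fromEdgeSet (G.neighborSet u).sym2) x
  rw [← coe_neighborFinset, qVal_fromEdgeSet_sym2, coe_neighborFinset,
    ← localComp_eq_symmDiff] at h
  convert h using 3

end EdgeCounts

/-- `(√X_u)† · √Z_{N(u)} · |G⟩ = |G*u⟩`, where `(√X_u)†` is the adjoint of `√X_u`
(characterized by `⟨φ|√X_u ψ⟩ = ⟨(√X_u)† φ|ψ⟩` for all `φ, ψ`). -/
theorem localComp_graphState {V : Type} [Fintype V] [DecidableEq V]
    (G : SimpleGraph V) [DecidableRel G.Adj] (u : V)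
    (sqrtXdag : QState V → QState V)
    (hdag : ∀ φ ψ : QState V, qInner φ (sqrtX u ψ) = qInner (sqrtXdag φ) ψ) :
    sqrtXdag (sqrtZset (G.neighborFinset u) (graphState G)) = graphState (localComp G u) := by
  funext y
  rw [adjoint_sqrtX_eq u sqrtXdag hdag]
  simp only [Xop, sqrtZset_apply, filter_neighborFinset_update, graphState,
    neg_one_pow_qVal_update_not, neg_one_pow_qVal_localComp,
    ← one_sub_I_div_two_mul_I_pow]
  ring
end

section
/- Let R be a real local Clifford transformation on the qubit set V, let G₁, G₂ be finite simple graphs on V and S₁, S₂ ⊆ V. If R|G₁;S₁⟩ = λ|G₂;S₂⟩ for some scalar λ with |λ|=1, then there exist subsets A, S₁', S₂' ⊆ V and a scalar μ with |μ|=1 such that H_A |G₁;S₁'⟩ = μ|G₂;S₂'⟩. -/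
/-- The Pauli matrix `X`. -/
def pXm : Matrix (Fin 2) (Fin 2) ℂ := !![0, 1; 1, 0]

/-- The Pauli matrix `Y`. -/
noncomputable def pYm : Matrix (Fin 2) (Fin 2) ℂ := !![0, -Complex.I; Complex.I, 0]

/-- The Pauli matrix `Z`. -/
def pZm : Matrix (Fin 2) (Fin 2) ℂ := !![1, 0; 0, -1]

/-- A real local Clifford transformation on `V` is (given by) a family of 2×2 unitary
matrices with real entries, each mapping the Pauli matrices `X` and `Z` to elements of
`{±X, ±Y, ±Z}` under conjugation. -/
def IsRealLocalClifford {V : Type*} (C : V → Matrix (Fin 2) (Fin 2) ℂ) : Prop :=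
  ∀ u, C u ∈ Matrix.unitaryGroup (Fin 2) ℂ ∧
    (∀ i j, (C u i j).im = 0) ∧
    (C u * pXm * (C u).conjTranspose ∈ ({pXm, -pXm, pYm, -pYm, pZm, -pZm} : Set (Matrix (Fin 2) (Fin 2) ℂ))) ∧
    (C u * pZm * (C u).conjTranspose ∈ ({pXm, -pXm, pYm, -pYm, pZm, -pZm} : Set (Matrix (Fin 2) (Fin 2) ℂ)))

/-- Index computational basis values `Bool` by `Fin 2`. -/
def b2 (b : Bool) : Fin 2 := if b then 1 else 0

/-- Apply the local (tensor product) operator `⊗_{u∈V} C_u` to a state. -/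
noncomputable def applyLocal {V : Type*} [Fintype V] [DecidableEq V]
    (C : V → Matrix (Fin 2) (Fin 2) ℂ) (ψ : QState V) : QState V :=
  fun x => ∑ y : V → Bool, (∏ u, C u (b2 (x u)) (b2 (y u))) * ψ y

/-- The Hadamard matrix. -/
noncomputable def Hmat : Matrix (Fin 2) (Fin 2) ℂ := (Real.sqrt 2 : ℂ)⁻¹ • !![1, 1; 1, -1]

/-!
A real single-qubit Clifford is determined up to a phase by its conjugation action on `X` and `Z`,
since `1, X, Z, ZX` span `M₂(ℂ)`. Realness rules out the images `±Y`, and as `X` and `Z`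
anticommute, their images are `±X` and `±Z` in some order; hence every such matrix is a phase
times `H^c X^a Z^b`, and `R` is a phase times `H_A X_T Z_B`. Now `Z_B |G;S⟩ = |G;S ∆ B⟩`, and
`X_u |G;S⟩ = ±|G;S ∆ N(u)⟩` because flipping qubit `u` changes the number of edges inside the
support by the number of neighbours of `u` in it. So `X_T Z_B |G₁;S₁⟩ = ±|G₁;S₁'⟩`, and the
remaining phase moves to the right-hand side.
-/

open Finset Matrix
open scoped symmDiff

local notation "Mat" => Matrix (Fin 2) (Fin 2) ℂ

local notation "Ad" => Unitary.conjStarAlgAut ℂ (Matrix (Fin 2) (Fin 2) ℂ)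

namespace Finset

variable {α : Type*} [DecidableEq α]

lemma card_symmDiff_add_two_mul_card_inter (s t : Finset α) :
    #(s ∆ t) + 2 * #(s ∩ t) = #s + #t := by
  rw [Finset.symmDiff_def, card_union_of_disjoint disjoint_sdiff_sdiff]
  have hs := card_sdiff_add_card_inter s t
  have ht := card_sdiff_add_card_inter t s
  rw [inter_comm] at ht
  omega

lemma neg_one_pow_card_symmDiff {R : Type*} [Monoid R] [HasDistribNeg R] (s t : Finset α) :
    (-1 : R) ^ #(s ∆ t) = (-1) ^ #s * (-1) ^ #t := by
  rw [← pow_add, ← card_symmDiff_add_two_mul_card_inter, pow_add, pow_mul, neg_one_sq, one_pow,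
    mul_one]

lemma filter_symmDiff (p : α → Prop) [DecidablePred p] (s t : Finset α) :
    (s ∆ t).filter p = s.filter p ∆ t.filter p := by
  ext a
  simp only [mem_filter, mem_symmDiff]
  tauto

end Finset

section SingleQubit

def IsRealMatrix (M : Mat) : Prop := ∀ i j, (M i j).im = 0

lemma IsRealMatrix.mul {M N : Mat} (hM : IsRealMatrix M) (hN : IsRealMatrix N) :
    IsRealMatrix (M * N) := by
  intro i j
  simp [Matrix.mul_apply, Fin.sum_univ_two, hM i _, hN _ j]

lemma IsRealMatrix.conjTranspose {M : Mat} (hM : IsRealMatrix M) : IsRealMatrix Mᴴ := by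
  intro i j
  simp [hM j i]

lemma isRealMatrix_pXm : IsRealMatrix pXm := by
  intro i j; fin_cases i <;> fin_cases j <;> simp [pXm]

lemma isRealMatrix_pZm : IsRealMatrix pZm := by
  intro i j; fin_cases i <;> fin_cases j <;> simp [pZm]

lemma not_isRealMatrix_pYm : ¬ IsRealMatrix pYm := fun h => by simpa [pYm] using h 0 1

lemma not_isRealMatrix_neg_pYm : ¬ IsRealMatrix (-pYm) := fun h => by simpa [pYm] using h 0 1

def signedPauli (s z : Bool) : Mat := (if s then -1 else 1 : ℂ) • (if z then pZm else pXm)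

lemma exists_signedPauli_of_isRealMatrix {M : Mat} (hM : IsRealMatrix M)
    (h : M ∈ ({pXm, -pXm, pYm, -pYm, pZm, -pZm} : Set Mat)) : ∃ s z, M = signedPauli s z := by
  rcases h with rfl | rfl | rfl | rfl | rfl | rfl
  · exact ⟨false, false, by simp [signedPauli]⟩
  · exact ⟨true, false, by simp [signedPauli]⟩
  · exact absurd hM not_isRealMatrix_pYm
  · exact absurd hM not_isRealMatrix_neg_pYm
  · exact ⟨false, true, by simp [signedPauli]⟩
  · exact ⟨true, true, by simp [signedPauli]⟩

lemma eq_not_of_signedPauli_anticomm {s z s' z' : Bool}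
    (h : signedPauli s z * signedPauli s' z' = -(signedPauli s' z' * signedPauli s z)) :
    z' = !z := by
  have h00 := congrFun (congrFun h 0) 0
  revert h00
  cases s <;> cases z <;> cases s' <;> cases z' <;>
    norm_num [signedPauli, pXm, pZm, Matrix.mul_apply, Fin.sum_univ_two]

lemma pXm_mul_pZm : pXm * pZm = -(pZm * pXm) := by
  ext i j; fin_cases i <;> fin_cases j <;> simp [pXm, pZm]

lemma StarAlgEquiv.ext_pXm_pZm {f g : Mat ≃⋆ₐ[ℂ] Mat} (hX : f pXm = g pXm) (hZ : f pZm = g pZm) :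
    f = g := by
  ext A : 1
  have hA : A = ((A 0 0 + A 1 1) / 2) • 1 + ((A 0 1 + A 1 0) / 2) • pXm
      + ((A 0 0 - A 1 1) / 2) • pZm + ((A 0 1 - A 1 0) / 2) • (pZm * pXm) := by
    ext i j; fin_cases i <;> fin_cases j <;> simp [pXm, pZm] <;> ring
  rw [hA]
  simp only [map_add, map_smul, map_mul, map_one, hX, hZ]

lemma exists_eq_phase_smul_of_Ad_eq {U W : unitaryGroup (Fin 2) ℂ}
    (hX : Ad U pXm = Ad W pXm) (hZ : Ad U pZm = Ad W pZm) :
    ∃ d : ℂ, ‖d‖ = 1 ∧ (U : Mat) = d • (W : Mat) := by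
  obtain ⟨d, hd⟩ := (Unitary.conjStarAlgAut_ext_iff U W).1 (StarAlgEquiv.ext_pXm_pZm hX hZ)
  refine ⟨d, ?_, hd⟩
  have h := Unitary.coe_star_mul_self U
  rw [hd, star_smul, smul_mul_smul_comm, Unitary.coe_star_mul_self] at h
  have h00 := congrFun (congrFun h 0) 0
  simp only [Matrix.smul_apply, one_apply_eq, smul_eq_mul, mul_one, Complex.star_def,
    Complex.conj_mul'] at h00
  exact (pow_eq_one_iff_of_nonneg (norm_nonneg d) two_ne_zero).1 (by exact_mod_cast h00)

lemma ofReal_sqrt_two_sq : ((Real.sqrt 2 : ℝ) : ℂ) ^ 2 = 2 := by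
  rw [← Complex.ofReal_pow, Real.sq_sqrt zero_le_two]
  norm_num

lemma Hmat_mem_unitaryGroup : Hmat ∈ unitaryGroup (Fin 2) ℂ := by
  rw [mem_unitaryGroup_iff]
  ext i j; fin_cases i <;> fin_cases j <;>
    simp [Hmat, Matrix.mul_apply, Fin.sum_univ_two] <;> field_simp <;> norm_num [ofReal_sqrt_two_sq]

lemma pXm_mem_unitaryGroup : pXm ∈ unitaryGroup (Fin 2) ℂ := by
  rw [mem_unitaryGroup_iff]
  ext i j; fin_cases i <;> fin_cases j <;> simp [pXm, Matrix.mul_apply, Fin.sum_univ_two]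

lemma pZm_mem_unitaryGroup : pZm ∈ unitaryGroup (Fin 2) ℂ := by
  rw [mem_unitaryGroup_iff]
  ext i j; fin_cases i <;> fin_cases j <;> simp [pZm, Matrix.mul_apply, Fin.sum_univ_two]

noncomputable def hadamardU : unitaryGroup (Fin 2) ℂ := ⟨Hmat, Hmat_mem_unitaryGroup⟩

def pauliXU : unitaryGroup (Fin 2) ℂ := ⟨pXm, pXm_mem_unitaryGroup⟩

def pauliZU : unitaryGroup (Fin 2) ℂ := ⟨pZm, pZm_mem_unitaryGroup⟩

lemma Ad_hadamardU_pXm : Ad hadamardU pXm = pZm := by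
  ext i j; fin_cases i <;> fin_cases j <;>
    simp [hadamardU, Hmat, pXm, pZm, Matrix.mul_apply, Fin.sum_univ_two] <;> field_simp <;>
    norm_num [ofReal_sqrt_two_sq]

lemma Ad_hadamardU_pZm : Ad hadamardU pZm = pXm := by
  ext i j; fin_cases i <;> fin_cases j <;>
    simp [hadamardU, Hmat, pXm, pZm, Matrix.mul_apply, Fin.sum_univ_two] <;> field_simp <;>
    norm_num [ofReal_sqrt_two_sq]

lemma Ad_pauliXU_pXm : Ad pauliXU pXm = pXm := by
  ext i j; fin_cases i <;> fin_cases j <;> simp [pauliXU, pXm, Matrix.mul_apply, Fin.sum_univ_two]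

lemma Ad_pauliXU_pZm : Ad pauliXU pZm = -pZm := by
  ext i j; fin_cases i <;> fin_cases j <;>
    simp [pauliXU, pXm, pZm, Matrix.mul_apply, Fin.sum_univ_two]

lemma Ad_pauliZU_pXm : Ad pauliZU pXm = -pXm := by
  ext i j; fin_cases i <;> fin_cases j <;>
    simp [pauliZU, pXm, pZm, Matrix.mul_apply, Fin.sum_univ_two]

lemma Ad_pauliZU_pZm : Ad pauliZU pZm = pZm := by
  ext i j; fin_cases i <;> fin_cases j <;> simp [pauliZU, pZm, Matrix.mul_apply, Fin.sum_univ_two]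

noncomputable def cliffordNF (a b c : Bool) : unitaryGroup (Fin 2) ℂ :=
  (if c then hadamardU else 1) * (if a then pauliXU else 1) * (if b then pauliZU else 1)

lemma coe_cliffordNF (a b c : Bool) :
    (cliffordNF a b c : Mat)
      = (if c then Hmat else 1) * (if a then pXm else 1) * (if b then pZm else 1) := by
  cases a <;> cases b <;> cases c <;> rfl

lemma Ad_cliffordNF_pXm (a b c : Bool) : Ad (cliffordNF a b c) pXm = signedPauli b c := by
  cases a <;> cases b <;> cases c <;>
    simp only [cliffordNF, signedPauli, Unitary.conjStarAlgAut_mul_apply, Bool.false_eq_true,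
      if_true, if_false, map_one, StarAlgEquiv.one_apply, map_neg, one_smul, neg_one_smul,
      Ad_hadamardU_pXm, Ad_pauliXU_pXm, Ad_pauliZU_pXm]

lemma Ad_cliffordNF_pZm (a b c : Bool) : Ad (cliffordNF a b c) pZm = signedPauli a (!c) := by
  cases a <;> cases b <;> cases c <;>
    simp only [cliffordNF, signedPauli, Unitary.conjStarAlgAut_mul_apply, Bool.false_eq_true,
      if_true, if_false, map_one, StarAlgEquiv.one_apply, map_neg, one_smul, neg_one_smul,
      Bool.not_false, Bool.not_true, Ad_hadamardU_pZm, Ad_pauliXU_pZm, Ad_pauliZU_pZm]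

lemma exists_eq_phase_smul_cliffordNF {M : Mat} (hM : M ∈ unitaryGroup (Fin 2) ℂ) (hreal : IsRealMatrix M)
    (hX : M * pXm * Mᴴ ∈ ({pXm, -pXm, pYm, -pYm, pZm, -pZm} : Set Mat))
    (hZ : M * pZm * Mᴴ ∈ ({pXm, -pXm, pYm, -pYm, pZm, -pZm} : Set Mat)) :
    ∃ (d : ℂ) (a b c : Bool), ‖d‖ = 1 ∧ M = d • (cliffordNF a b c : Mat) := by
  let U : unitaryGroup (Fin 2) ℂ := ⟨M, hM⟩
  obtain ⟨b, c, hb⟩ := exists_signedPauli_of_isRealMatrix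
    ((hreal.mul isRealMatrix_pXm).mul hreal.conjTranspose) hX
  obtain ⟨a, c', ha⟩ := exists_signedPauli_of_isRealMatrix
    ((hreal.mul isRealMatrix_pZm).mul hreal.conjTranspose) hZ
  change Ad U pXm = _ at hb
  change Ad U pZm = _ at ha
  have hanti : signedPauli b c * signedPauli a c' = -(signedPauli a c' * signedPauli b c) := by
    rw [← hb, ← ha, ← map_mul, ← map_mul, pXm_mul_pZm, map_neg]
  obtain rfl := eq_not_of_signedPauli_anticomm hanti
  obtain ⟨d, hd, hMd⟩ := exists_eq_phase_smul_of_Ad_eq (U := U) (W := cliffordNF a b c)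
    (by rw [hb, Ad_cliffordNF_pXm]) (by rw [ha, Ad_cliffordNF_pZm])
  exact ⟨d, a, b, c, hd, hMd⟩

end SingleQubit

section PauliAction

variable {V : Type*} [DecidableEq V]

lemma Zop_Zop (B S : Finset V) (ψ : QState V) : Zop B (Zop S ψ) = Zop (S ∆ B) ψ := by
  funext x
  simp only [Zop, filter_symmDiff, neg_one_pow_card_symmDiff]
  ring

lemma neg_one_pow_card_filter_update (S : Finset V) (x : V → Bool) (u : V) :
    (-1 : ℂ) ^ #(S.filter (fun v => Function.update x u (!x u) v = true))
      = (if u ∈ S then -1 else 1) * (-1) ^ #(S.filter (fun v => x v = true)) := by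
  have h : S.filter (fun v => Function.update x u (!x u) v = true)
      = S.filter (fun v => x v = true) ∆ S.filter (· = u) := by
    ext v
    by_cases hv : v = u
    · subst hv
      cases hxv : x v <;> simp [mem_symmDiff, hxv]
    · simp [mem_symmDiff, hv]
  rw [h, neg_one_pow_card_symmDiff, filter_eq']
  split_ifs <;> simp [mul_comm]

lemma Xop_smul (u : V) (c : ℂ) (ψ : QState V) : Xop u (c • ψ) = c • Xop u ψ := rfl

def XopSet (T : Finset V) (ψ : QState V) : QState V :=
  fun x => ψ (fun v => if v ∈ T then !x v else x v)

lemma XopSet_insert {a : V} {T : Finset V} (ha : a ∉ T) (ψ : QState V) :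
    XopSet (insert a T) ψ = Xop a (XopSet T ψ) := by
  funext x
  simp only [XopSet, Xop]
  congr 1
  funext v
  by_cases hv : v = a
  · subst hv
    simp [ha]
  · simp [hv]

end PauliAction

section GraphStates

variable {V : Type*} [Fintype V] [DecidableEq V] (G : SimpleGraph V) [DecidableRel G.Adj]

lemma Zop_sgState (B S : Finset V) : Zop B (sgState G S) = sgState G (S ∆ B) :=
  Zop_Zop B S _

lemma qVal_eq_add (u : V) (x : V → Bool) :
    qVal G x = #(G.edgeFinset.filter (fun e => (∀ v ∈ e, x v = true) ∧ u ∉ e))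
      + #((G.neighborFinset u).filter (fun v => x u = true ∧ x v = true)) := by
  rw [qVal, ← card_filter_add_card_filter_not (p := fun e => u ∉ e), filter_filter, filter_filter]
  congr 1
  symm
  apply card_bij (fun v _ => s(u, v))
  · intro v hv
    simp only [mem_filter, SimpleGraph.mem_neighborFinset] at hv
    simp [hv.1, hv.2.1, hv.2.2, or_imp, forall_and]
  · intro v _ w _ h
    exact Sym2.congr_right.1 h
  · intro e he
    obtain ⟨he, hx, hu⟩ := by simpa only [mem_filter, SimpleGraph.mem_edgeFinset, not_not] using he
    refine ⟨Sym2.Mem.other hu, ?_, Sym2.other_spec hu⟩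
    rw [← Sym2.other_spec hu, SimpleGraph.mem_edgeSet] at he
    simp only [mem_filter, SimpleGraph.mem_neighborFinset]
    exact ⟨he, hx u hu, hx _ (Sym2.other_mem hu)⟩

lemma neg_one_pow_qVal_update (x : V → Bool) (u : V) :
    (-1 : ℂ) ^ qVal G (Function.update x u (!x u))
      = (-1) ^ #((G.neighborFinset u).filter (fun v => x v = true)) * (-1) ^ qVal G x := by
  set x' := Function.update x u (!x u)
  have hfar : G.edgeFinset.filter (fun e => (∀ v ∈ e, x' v = true) ∧ u ∉ e)
      = G.edgeFinset.filter (fun e => (∀ v ∈ e, x v = true) ∧ u ∉ e) := by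
    refine filter_congr fun e _ => and_congr_left fun hu => forall₂_congr fun v hv => ?_
    simp only [x', Function.update_of_ne (ne_of_mem_of_not_mem hv hu)]
  have hnear : (G.neighborFinset u).filter (fun v => x' u = true ∧ x' v = true)
      = (G.neighborFinset u).filter (fun v => x u = false ∧ x v = true) := by
    refine filter_congr fun v hv => ?_
    rw [SimpleGraph.mem_neighborFinset] at hv
    simp [x', Function.update_of_ne hv.ne']
  rw [← pow_add, qVal_eq_add G u x', qVal_eq_add G u x, hfar, hnear]
  apply neg_one_pow_congr
  simp only [Nat.even_iff]
  cases x u <;> simp <;> omega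

lemma Xop_sgState (S : Finset V) (u : V) :
    Xop u (sgState G S)
      = (if u ∈ S then -1 else 1 : ℂ) • sgState G (S ∆ G.neighborFinset u) := by
  funext x
  simp only [Xop, sgState, Zop, graphState, Pi.smul_apply, smul_eq_mul,
    neg_one_pow_card_filter_update, neg_one_pow_qVal_update, filter_symmDiff,
    neg_one_pow_card_symmDiff]
  ring

lemma exists_XopSet_sgState (T S : Finset V) :
    ∃ (ε : ℂ) (S' : Finset V), ‖ε‖ = 1 ∧ XopSet T (sgState G S) = ε • sgState G S' := by
  induction T using Finset.induction_on with
  | empty => exact ⟨1, S, norm_one, by funext x; simp [XopSet]⟩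
  | @insert a T ha ih =>
    obtain ⟨ε, S', hε, h⟩ := ih
    refine ⟨(if a ∈ S' then -1 else 1) * ε, S' ∆ G.neighborFinset a, ?_, ?_⟩
    · split_ifs <;> simp [hε]
    · rw [XopSet_insert ha, h, Xop_smul, Xop_sgState, smul_smul, mul_comm ε]

end GraphStates

section LocalOperators

variable {V : Type*} [Fintype V] [DecidableEq V]

lemma applyLocal_smul (M : V → Mat) (c : ℂ) (ψ : QState V) :
    applyLocal M (c • ψ) = c • applyLocal M ψ := by
  funext x
  simp only [applyLocal, Pi.smul_apply, smul_eq_mul, mul_sum]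
  exact sum_congr rfl fun y _ => mul_left_comm _ _ _

lemma applyLocal_smul_matrices (d : V → ℂ) (M : V → Mat) (ψ : QState V) :
    applyLocal (fun u => d u • M u) ψ = (∏ u, d u) • applyLocal M ψ := by
  funext x
  simp only [applyLocal, Matrix.smul_apply, smul_eq_mul, Pi.smul_apply, prod_mul_distrib, mul_sum,
    mul_assoc]

lemma applyLocal_mul (M N : V → Mat) (ψ : QState V) :
    applyLocal (fun u => M u * N u) ψ = applyLocal M (applyLocal N ψ) := by
  funext x
  have hentry : ∀ z : V → Bool, ∏ u, (M u * N u) (b2 (x u)) (b2 (z u))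
      = ∑ y : V → Bool, ∏ u, M u (b2 (x u)) (b2 (y u)) * N u (b2 (y u)) (b2 (z u)) := by
    intro z
    rw [← Fintype.prod_sum fun u (b : Bool) => M u (b2 (x u)) (b2 b) * N u (b2 b) (b2 (z u))]
    refine prod_congr rfl fun u _ => ?_
    simp [Matrix.mul_apply, Fin.sum_univ_two, b2, add_comm]
  simp only [applyLocal, hentry, mul_sum, sum_mul, prod_mul_distrib]
  rw [sum_comm]
  exact sum_congr rfl fun y _ => sum_congr rfl fun z _ => by ring

lemma applyLocal_apply_of_monomial (M : V → Mat) (σ : V → Bool → Bool) (w : V → Bool → ℂ)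
    (hM : ∀ u b b', M u (b2 b) (b2 b') = if b' = σ u b then w u b else 0)
    (ψ : QState V) (x : V → Bool) :
    applyLocal M ψ x = (∏ u, w u (x u)) * ψ (fun u => σ u (x u)) := by
  simp only [applyLocal, hM, prod_ite_zero, mem_univ, forall_const, ite_mul, zero_mul]
  simp [← funext_iff]

lemma applyLocal_pZm (B : Finset V) (ψ : QState V) :
    applyLocal (fun u => if u ∈ B then pZm else 1) ψ = Zop B ψ := by
  funext x
  rw [applyLocal_apply_of_monomial _ (fun _ b => b) (fun u b => if u ∈ B ∧ b = true then -1 else 1)]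
  · rw [Zop, prod_ite, prod_const_one, mul_one, prod_const]
    congr 3
    ext u
    simp
  · intro u b b'
    by_cases hu : u ∈ B <;> cases b <;> cases b' <;> simp [hu, pZm, b2]

lemma applyLocal_pXm (T : Finset V) (ψ : QState V) :
    applyLocal (fun u => if u ∈ T then pXm else 1) ψ = XopSet T ψ := by
  funext x
  rw [applyLocal_apply_of_monomial _ (fun u b => if u ∈ T then !b else b) (fun _ _ => 1)]
  · simp [XopSet]
  · intro u b b'
    by_cases hu : u ∈ T <;> cases b <;> cases b' <;> simp [hu, pXm, b2]

end LocalOperators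

/-- If a real local Clifford transformation `R` maps `|G₁;S₁⟩` to `λ|G₂;S₂⟩` with `|λ|=1`,
then there are `A, S₁', S₂' ⊆ V` and `μ` with `|μ|=1` such that
`H_A |G₁;S₁'⟩ = μ|G₂;S₂'⟩`, where `H_A` applies a Hadamard on each qubit of `A`. -/
theorem realClifford_to_hadamards {V : Type} [Fintype V] [DecidableEq V]
    (C : V → Matrix (Fin 2) (Fin 2) ℂ) (hC : IsRealLocalClifford C)
    (G₁ G₂ : SimpleGraph V) [DecidableRel G₁.Adj] [DecidableRel G₂.Adj]
    (S₁ S₂ : Finset V) (c : ℂ) (hc : ‖c‖ = 1)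
    (h : applyLocal C (sgState G₁ S₁) = c • sgState G₂ S₂) :
    ∃ (A S₁' S₂' : Finset V) (μ : ℂ), ‖μ‖ = 1 ∧
      applyLocal (fun u => if u ∈ A then Hmat else 1) (sgState G₁ S₁') = μ • sgState G₂ S₂' := by
  choose d a b c' hd hCu using fun u =>
    exists_eq_phase_smul_cliffordNF (hC u).1 (hC u).2.1 (hC u).2.2.1 (hC u).2.2.2
  set A := univ.filter (fun u => c' u = true)
  set T := univ.filter (fun u => a u = true)
  set B := univ.filter (fun u => b u = true)
  have hC_eq : C = fun u => d u • ((if u ∈ A then Hmat else 1) * (if u ∈ T then pXm else 1)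
      * (if u ∈ B then pZm else 1)) := by
    funext u
    simp [hCu u, coe_cliffordNF, A, T, B]
  obtain ⟨ε, S₁', hε, hflip⟩ := exists_XopSet_sgState G₁ T (S₁ ∆ B)
  rw [hC_eq, applyLocal_smul_matrices, applyLocal_mul, applyLocal_mul, applyLocal_pZm,
    applyLocal_pXm, Zop_sgState, hflip, applyLocal_smul, smul_smul] at h
  have hk : ‖(∏ u, d u) * ε‖ = 1 := by simp [norm_prod, hd, hε]
  refine ⟨A, S₁', S₂, ((∏ u, d u) * ε)⁻¹ * c, by rw [norm_mul, norm_inv, hk, hc, inv_one, one_mul], ?_⟩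
  rw [← smul_smul, ← h, smul_smul, inv_mul_cancel₀ (norm_ne_zero_iff.1 (hk ▸ one_ne_zero)),
    one_smul]
end
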